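/- arXiv:1811.00725 — 5 statements merged into one kernel-verified Lean document; each statement's English description precedes it below -/
import Mathlib

section
/- Let A be a commutative Noetherian ℕ-graded ring with 1 and n ≥ 3. Every matrix α ∈ E_n(A) whose degree-zero part is the identity (i.e., α^+(0) = I_n) lies in the subgroup of GL_n(A) generated by the elements ε (I_n + a e_ij) ε^{−1}, where i ≠ j, a ∈ A_+, and ε ∈ E_n(A_0) (elementary matrices with all entries in the degree-zero subring A_0). -/
open Matrix

/-- The Swan–Weibel map `b ↦ b⁺(a) = Σ_i b_i * a ^ i`, where `b = Σ_i b_i` is the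
decomposition of `b` into its homogeneous components `b_i ∈ 𝒜 i`. -/
noncomputable def swPlus {A : Type*} [CommRing A] (𝒜 : ℕ → AddSubgroup A) [GradedRing 𝒜]
    (a b : A) : A :=
  DirectSum.toAddMonoid
    (fun i => (AddMonoidHom.mulRight (a ^ i)).comp (𝒜 i).subtype)
    (DirectSum.decompose 𝒜 b)

/-- The Swan–Weibel map `α ↦ α⁺(a)` applied entrywise to a square matrix;
in particular `swMatrix 𝒜 0 α` is the degree-zero part of `α`. -/
noncomputable def swMatrix {A : Type*} [CommRing A] (𝒜 : ℕ → AddSubgroup A) [GradedRing 𝒜]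
    {n : ℕ} (a : A) (α : Matrix (Fin n) (Fin n) A) : Matrix (Fin n) (Fin n) A :=
  Matrix.of fun i j => swPlus 𝒜 a (α i j)

/-- The degree-zero subring `A₀` of `A`. -/
def gradeZero {A : Type*} [CommRing A] (𝒜 : ℕ → AddSubgroup A) [GradedRing 𝒜] :
    Subring A :=
  SetLike.GradeZero.subring 𝒜

/-- The multiplicative subset `A₀ \ p` of `A`, for a prime ideal `p` of the degree-zero
subring `A₀`; localizing `A` at it gives `A_p`. -/
def primeComplIn {A : Type*} [CommRing A] (𝒜 : ℕ → AddSubgroup A) [GradedRing 𝒜]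
    (p : Ideal ↥(gradeZero 𝒜)) (hp : p.IsPrime) : Submonoid A :=
  Submonoid.map (gradeZero 𝒜).subtype (@Ideal.primeCompl _ _ p hp)

/-- `Eₙ(R)`: the subgroup of `GLₙ(R)` generated by the elementary matrices
`Eᵢⱼ(t) = 1 + t eᵢⱼ` (`i ≠ j`, `t ∈ R`), realized as the set of all products of
elementary matrices (the generating set is closed under inverses, so the submonoid
it generates coincides with the subgroup it generates). -/
def elemGroup (R : Type*) [CommRing R] (n : ℕ) : Submonoid (Matrix (Fin n) (Fin n) R) :=
  Submonoid.closure
    {M | ∃ (i j : Fin n) (t : R), i ≠ j ∧ M = 1 + Matrix.single i j t}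

/-- `Eₙ(A₀)`: elementary matrices over the degree-zero subring `A₀`, viewed as matrices
over `A` (all entries lie in `A₀`). -/
def elemGroupZero {A : Type*} [CommRing A] (𝒜 : ℕ → AddSubgroup A) [GradedRing 𝒜]
    (n : ℕ) : Submonoid (Matrix (Fin n) (Fin n) A) :=
  Submonoid.closure
    {M | ∃ (i j : Fin n) (t : A), i ≠ j ∧ t ∈ 𝒜 0 ∧ M = 1 + Matrix.single i j t}

section Aux

variable {A : Type*} [CommRing A] (𝒜 : ℕ → AddSubgroup A) [GradedRing 𝒜] {n : ℕ}

lemma swPlus_zero (b : A) : swPlus 𝒜 0 b = GradedRing.projZeroRingHom 𝒜 b := by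
  refine DirectSum.Decomposition.inductionOn 𝒜
    (motive := fun b => swPlus 𝒜 0 b = GradedRing.projZeroRingHom 𝒜 b) ?_ ?_ ?_ b
  · simp [swPlus]
  · intro i m
    rcases i with _ | i
    · simp [swPlus, DirectSum.decompose_coe, DirectSum.toAddMonoid_of,
        GradedRing.projZeroRingHom_apply, DirectSum.decompose_of_mem_same 𝒜 m.2]
    · have h2 : ((DirectSum.decompose 𝒜 (m : A)) 0 : A) = 0 :=
        DirectSum.decompose_of_mem_ne 𝒜 m.2 (Nat.succ_ne_zero i)
      simp only [DirectSum.decompose_coe] at h2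
      simp [swPlus, DirectSum.decompose_coe, DirectSum.toAddMonoid_of,
        GradedRing.projZeroRingHom_apply, h2]
  · intro x y hx hy
    simp [swPlus, DirectSum.decompose_add, map_add, GradedRing.projZeroRingHom_apply] at *
    simp [hx, hy]

lemma swMatrix_zero (α : Matrix (Fin n) (Fin n) A) :
    swMatrix 𝒜 0 α = (GradedRing.projZeroRingHom 𝒜).mapMatrix α := by
  ext i j
  simp [swMatrix, swPlus_zero, RingHom.mapMatrix_apply, Matrix.map_apply]

lemma map_stdBasisMatrix' {R S : Type*} [CommRing R] [CommRing S] (f : R →+* S)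
    (i j : Fin n) (t : R) :
    (Matrix.single i j t).map f = Matrix.single i j (f t) := by
  ext k l
  simp [Matrix.map_apply, Matrix.single, Matrix.of_apply, apply_ite f]

lemma elemGroup_det {R : Type*} [CommRing R] {α : Matrix (Fin n) (Fin n) R}
    (hα : α ∈ elemGroup R n) : α.det = 1 := by
  induction hα using Submonoid.closure_induction with
  | mem M hM =>
    obtain ⟨i, j, t, hij, rfl⟩ := hM
    exact Matrix.det_transvection_of_ne i j hij t
  | one => simp
  | mul x y hx hy px py => rw [Matrix.det_mul, px, py, one_mul]

lemma elemGroupZero_sub : elemGroupZero 𝒜 n ≤ elemGroup A n := by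
  apply Submonoid.closure_le.2
  rintro M ⟨i, j, t, hij, -, rfl⟩
  exact Submonoid.subset_closure ⟨i, j, t, hij, rfl⟩

lemma elemGroupZero_mul_inv {ε : Matrix (Fin n) (Fin n) A}
    (hε : ε ∈ elemGroupZero 𝒜 n) : ε * ε⁻¹ = 1 :=
  Matrix.mul_nonsing_inv ε (by rw [elemGroup_det (elemGroupZero_sub 𝒜 hε)]; exact isUnit_one)

lemma elemGroupZero_inv_mul {ε : Matrix (Fin n) (Fin n) A}
    (hε : ε ∈ elemGroupZero 𝒜 n) : ε⁻¹ * ε = 1 :=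
  Matrix.nonsing_inv_mul ε (by rw [elemGroup_det (elemGroupZero_sub 𝒜 hε)]; exact isUnit_one)

end Aux

section Main

variable {A : Type*} [CommRing A] (𝒜 : ℕ → AddSubgroup A) [GradedRing 𝒜] {n : ℕ}

/-- The target generating set. -/
def targetSet (𝒜 : ℕ → AddSubgroup A) [GradedRing 𝒜] (n : ℕ) :
    Set (Matrix (Fin n) (Fin n) A) :=
  {M : Matrix (Fin n) (Fin n) A |
    ∃ ε ∈ elemGroupZero 𝒜 n, ∃ (i j : Fin n) (a : A), i ≠ j ∧
      (DirectSum.decompose 𝒜 a 0 : A) = 0 ∧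
      M = ε * (1 + Matrix.single i j a) * ε⁻¹}

lemma conj_mem {ε β : Matrix (Fin n) (Fin n) A} (hε : ε ∈ elemGroupZero 𝒜 n)
    (hβ : β ∈ Submonoid.closure (targetSet 𝒜 n)) :
    ε * β * ε⁻¹ ∈ Submonoid.closure (targetSet 𝒜 n) := by
  induction hβ using Submonoid.closure_induction with
  | mem M hM =>
    obtain ⟨ε', hε', i, j, a, hij, ha, rfl⟩ := hM
    refine Submonoid.subset_closure ⟨ε * ε', mul_mem hε hε', i, j, a, hij, ha, ?_⟩
    rw [Matrix.mul_inv_rev]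
    simp only [mul_assoc]
  | one =>
    rw [mul_one, elemGroupZero_mul_inv 𝒜 hε]
    exact one_mem _
  | mul x y hx hy px py =>
    have h := elemGroupZero_inv_mul 𝒜 hε
    have key : (ε * x * ε⁻¹) * (ε * y * ε⁻¹) = ε * (x * y) * ε⁻¹ := by
      calc (ε * x * ε⁻¹) * (ε * y * ε⁻¹)
          = ε * x * ((ε⁻¹ * ε) * (y * ε⁻¹)) := by simp only [mul_assoc]
        _ = ε * (x * y) * ε⁻¹ := by rw [h, one_mul]; simp only [mul_assoc]
    rw [← key]
    exact mul_mem px py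

lemma main_decomp {α : Matrix (Fin n) (Fin n) A} (hα : α ∈ elemGroup A n) :
    ∃ β ε : Matrix (Fin n) (Fin n) A,
      β ∈ Submonoid.closure (targetSet 𝒜 n) ∧ ε ∈ elemGroupZero 𝒜 n ∧ α = β * ε := by
  induction hα using Submonoid.closure_induction with
  | mem M hM =>
    obtain ⟨i, j, t, hij, rfl⟩ := hM
    set t0 : A := (DirectSum.decompose 𝒜 t 0 : A) with ht0
    set a : A := t - t0 with ha
    have ht0mem : t0 ∈ 𝒜 0 := SetLike.coe_mem _
    have ha0 : (DirectSum.decompose 𝒜 a 0 : A) = 0 := by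
      rw [ha, DirectSum.decompose_sub, DirectSum.sub_apply, AddSubgroup.coe_sub,
        DirectSum.decompose_of_mem_same 𝒜 ht0mem, sub_self]
    set ε : Matrix (Fin n) (Fin n) A := 1 + Matrix.single i j t0 with hεdef
    have hε : ε ∈ elemGroupZero 𝒜 n :=
      Submonoid.subset_closure ⟨i, j, t0, hij, ht0mem, rfl⟩
    set g : Matrix (Fin n) (Fin n) A := 1 + Matrix.single i j a with hgdef
    have hsplit : (1 : Matrix (Fin n) (Fin n) A) + Matrix.single i j t = ε * g := by
      have hzero : Matrix.single i j t0 * Matrix.single i j a = 0 :=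
        Matrix.single_mul_single_of_ne (c := t0) i j i (Ne.symm hij) a
      have hadd : Matrix.single i j t0 + Matrix.single i j a
          = Matrix.single i j t := by
        rw [← Matrix.single_add]
        congr 1
        rw [ha]; ring
      rw [hεdef, hgdef, add_mul, one_mul, mul_add, mul_one, hzero, add_zero, add_assoc,
        add_comm (Matrix.single i j a), hadd]
    refine ⟨ε * g * ε⁻¹, ε, Submonoid.subset_closure
      ⟨ε, hε, i, j, a, hij, ha0, rfl⟩, hε, ?_⟩
    rw [hsplit, mul_assoc, elemGroupZero_inv_mul 𝒜 hε, mul_one]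
  | one => exact ⟨1, 1, one_mem _, one_mem _, (one_mul 1).symm⟩
  | mul x y hx hy px py =>
    obtain ⟨βx, εx, hβx, hεx, rfl⟩ := px
    obtain ⟨βy, εy, hβy, hεy, rfl⟩ := py
    refine ⟨βx * (εx * βy * εx⁻¹), εx * εy,
      mul_mem hβx (conj_mem 𝒜 hεx hβy), mul_mem hεx hεy, ?_⟩
    have h := elemGroupZero_inv_mul 𝒜 hεx
    have key : βx * (εx * βy * εx⁻¹) * (εx * εy) = βx * εx * (βy * εy) := by
      calc βx * (εx * βy * εx⁻¹) * (εx * εy)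
          = βx * (εx * (βy * ((εx⁻¹ * εx) * εy))) := by simp only [mul_assoc]
        _ = βx * εx * (βy * εy) := by rw [h, one_mul]; simp only [mul_assoc]
    exact key.symm

lemma proj_target_one {β : Matrix (Fin n) (Fin n) A}
    (hβ : β ∈ Submonoid.closure (targetSet 𝒜 n)) :
    (GradedRing.projZeroRingHom 𝒜).mapMatrix β = 1 := by
  induction hβ using Submonoid.closure_induction with
  | mem M hM =>
    obtain ⟨ε, hε, i, j, a, hij, ha, rfl⟩ := hM
    have hmid : (GradedRing.projZeroRingHom 𝒜).mapMatrix
        (1 + Matrix.single i j a) = 1 := by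
      rw [_root_.map_add, _root_.map_one, RingHom.mapMatrix_apply, map_stdBasisMatrix',
        GradedRing.projZeroRingHom_apply, ha, Matrix.single_zero, add_zero]
    rw [_root_.map_mul, _root_.map_mul, hmid, mul_one, ← _root_.map_mul, elemGroupZero_mul_inv 𝒜 hε, _root_.map_one]
  | one => exact _root_.map_one _
  | mul x y hx hy px py => rw [_root_.map_mul, px, py, one_mul]

lemma proj_zero_fix {ε : Matrix (Fin n) (Fin n) A} (hε : ε ∈ elemGroupZero 𝒜 n) :
    (GradedRing.projZeroRingHom 𝒜).mapMatrix ε = ε := by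
  induction hε using Submonoid.closure_induction with
  | mem M hM =>
    obtain ⟨i, j, t, hij, ht, rfl⟩ := hM
    rw [_root_.map_add, _root_.map_one, RingHom.mapMatrix_apply, map_stdBasisMatrix',
      GradedRing.projZeroRingHom_apply, DirectSum.decompose_of_mem_same 𝒜 ht]
  | one => exact _root_.map_one _
  | mul x y hx hy px py => rw [_root_.map_mul, px, py]

end Main

/-- If `A` is a commutative Noetherian ℕ-graded ring and `n ≥ 3`, then every `α ∈ Eₙ(A)`
with degree-zero part the identity (`α⁺(0) = Iₙ`) lies in the subgroup generated by the
elements `ε (Iₙ + a eᵢⱼ) ε⁻¹` with `i ≠ j`, `a ∈ A₊` (i.e. of zero degree-zero component)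
and `ε ∈ Eₙ(A₀)`.  (The generating set is closed under inverses, so the submonoid it
generates coincides with the subgroup it generates.) -/
theorem elem_gradedPlus_conjugate_generation {A : Type*} [CommRing A] [IsNoetherianRing A]
    (𝒜 : ℕ → AddSubgroup A) [GradedRing 𝒜] (n : ℕ) (hn : 3 ≤ n)
    (α : Matrix (Fin n) (Fin n) A) (hα : α ∈ elemGroup A n)
    (h0 : swMatrix 𝒜 0 α = 1) :
    α ∈ Submonoid.closure
      {M : Matrix (Fin n) (Fin n) A |
        ∃ ε ∈ elemGroupZero 𝒜 n, ∃ (i j : Fin n) (a : A), i ≠ j ∧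
          (DirectSum.decompose 𝒜 a 0 : A) = 0 ∧
          M = ε * (1 + Matrix.single i j a) * ε⁻¹} := by
  obtain ⟨β, ε, hβ, hε, rfl⟩ := main_decomp 𝒜 hα
  rw [swMatrix_zero, _root_.map_mul, proj_target_one 𝒜 hβ, proj_zero_fix 𝒜 hε, one_mul] at h0
  rw [h0, mul_one]
  exact hβ
end

section
/- Let R be a commutative Noetherian ring with 1, s ∈ R, and n ≥ 1. Then there exists a natural number k such that for every α ∈ GL_n(R) with α ≡ I_n modulo the ideal s^k R (entrywise), if the image of α in GL_n(R_s) under the localization map is the identity, then α = I_n. In other words, the induced homomorphism from the congruence subgroup {α ∈ GL_n(R) : α ≡ I_n mod s^k R} to GL_n(R_s) is injective. -/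
open Matrix

/-- Let `R` be a commutative Noetherian ring, `s ∈ R` and `n ≥ 1`.  There is a `k ∈ ℕ`
such that the homomorphism `GLₙ(R) → GLₙ(R_s)` induced by localization is injective on
the congruence subgroup `{α ∈ GLₙ(R) : α ≡ Iₙ mod sᵏR}`: if `α ≡ Iₙ mod sᵏR` entrywise
and the image of `α` in `GLₙ(R_s)` is the identity, then `α = Iₙ`. -/
theorem localization_injective_on_congruence {R : Type*} [CommRing R] [IsNoetherianRing R]
    (s : R) (n : ℕ) (hn : 1 ≤ n) :
    ∃ k : ℕ, ∀ α : (Matrix (Fin n) (Fin n) R)ˣ,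
      (∀ i j, (α : Matrix (Fin n) (Fin n) R) i j - (1 : Matrix (Fin n) (Fin n) R) i j ∈
        Ideal.span {s ^ k}) →
      (algebraMap R (Localization.Away s)).mapMatrix (α : Matrix (Fin n) (Fin n) R) = 1 →
      (α : Matrix (Fin n) (Fin n) R) = 1 := by
  -- ascending chain of annihilators of powers of s
  let f : ℕ →o Submodule R R :=
    ⟨fun m => LinearMap.ker (LinearMap.lsmul R R (s ^ m)), by
      intro a b hab x hx
      simp only [LinearMap.mem_ker, LinearMap.lsmul_apply, smul_eq_mul] at hx ⊢
      obtain ⟨c, rfl⟩ := Nat.exists_eq_add_of_le hab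
      rw [pow_add, mul_comm (s ^ a), mul_assoc, hx, mul_zero]⟩
  obtain ⟨N, hN⟩ := monotone_stabilizes_iff_noetherian.mpr (inferInstance : IsNoetherian R R) f
  refine ⟨N, fun α hcong hloc => ?_⟩
  ext i j
  have hx : (α : Matrix (Fin n) (Fin n) R) i j - (1 : Matrix (Fin n) (Fin n) R) i j = 0 := by
    set x := (α : Matrix (Fin n) (Fin n) R) i j - (1 : Matrix (Fin n) (Fin n) R) i j with hxdef
    -- x is killed by the localization map
    have hmap : algebraMap R (Localization.Away s) x = 0 := by
      have h1 : algebraMap R (Localization.Away s) ((α : Matrix (Fin n) (Fin n) R) i j)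
          = algebraMap R (Localization.Away s) ((1 : Matrix (Fin n) (Fin n) R) i j) := by
        have := congrFun (congrFun (congrArg (fun M => (M : Matrix (Fin n) (Fin n)
          (Localization.Away s))) hloc) i) j
        simp only [RingHom.mapMatrix_apply, Matrix.map_apply] at this
        rw [this, Matrix.one_apply, Matrix.one_apply]
        split <;> simp
      rw [hxdef, map_sub, h1, sub_self]
    -- hence killed by some power of s
    obtain ⟨⟨c, m, rfl⟩, hc⟩ := (IsLocalization.map_eq_zero_iff (Submonoid.powers s)
      (Localization.Away s) x).mp hmap
    -- x = s^N * y
    obtain ⟨y, hy⟩ := Ideal.mem_span_singleton'.mp (hcong i j)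
    have hc' : s ^ m * x = 0 := hc
    -- then s^(m+N) * y = 0, so y ∈ f (m+N) = f N, so s^N * y = 0, so x = 0
    have hy' : y ∈ f (m + N) := by
      show s ^ (m + N) • y = 0
      rw [smul_eq_mul]
      calc s ^ (m + N) * y = s ^ m * (y * s ^ N) := by ring
        _ = s ^ m * x := by rw [hy, hxdef]
        _ = 0 := hc'
    have hy'' : y ∈ f N := (hN (m + N) (Nat.le_add_left N m)) ▸ hy'
    have hy3 : s ^ N * y = 0 := hy''
    rw [hxdef, ← hy, mul_comm y, hy3]
  exact sub_eq_zero.mp hx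
end

section
/- Let R be a commutative semilocal ring with 1 (i.e., R has only finitely many maximal ideals) and n ≥ 2. Then every unimodular row v = (v_1,…,v_n) ∈ R^n is completable: there exists ε ∈ E_n(R) such that v · ε = (1, 0, …, 0). -/
open Matrix

section Aux

variable {R : Type*} [CommRing R] {n : ℕ}

lemma elem_mem {i j : Fin n} (h : i ≠ j) (t : R) :
    (1 + single i j t) ∈ elemGroup R n :=
  Submonoid.subset_closure ⟨i, j, t, h, rfl⟩

lemma sum_row_mem (k : Fin n) (t : Fin n → R) (ht : t k = 0) :
    (1 + ∑ i, single i k (t i)) ∈ elemGroup R n := by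
  have H : ∀ s : Finset (Fin n), (∀ i ∈ s, i ≠ k) →
      (1 + ∑ i ∈ s, single i k (t i)) ∈ elemGroup R n := by
    intro s
    induction s using Finset.induction with
    | empty => simpa using one_mem _
    | @insert a s ha ih =>
      intro hs
      have hak : a ≠ k := hs a (Finset.mem_insert_self a s)
      have key : (1 + single a k (t a)) * (1 + ∑ i ∈ s, single i k (t i))
          = 1 + ∑ i ∈ insert a s, single i k (t i) := by
        have hz : single a k (t a) * (∑ i ∈ s, single i k (t i)) = 0 := by
          rw [Finset.mul_sum]
          refine Finset.sum_eq_zero fun i hi => ?_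
          exact Matrix.single_mul_single_of_ne (c := t a) (i := a) (j := k) (h := Ne.symm (hs i (Finset.mem_insert_of_mem hi))) ..
        rw [Finset.sum_insert ha, mul_add, mul_one, add_mul, one_mul, hz]
        abel
      rw [← key]
      exact mul_mem (elem_mem hak (t a)) (ih fun i hi => hs i (Finset.mem_insert_of_mem hi))
  have : ∑ i ∈ Finset.univ.erase k, single i k (t i) = ∑ i, single i k (t i) :=
    Finset.sum_erase _ (by simp [ht])
  rw [← this]
  exact H _ (fun i hi => (Finset.mem_erase.mp hi).1)

lemma sum_col_mem (k : Fin n) (t : Fin n → R) (ht : t k = 0) :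
    (1 + ∑ i, single k i (t i)) ∈ elemGroup R n := by
  have H : ∀ s : Finset (Fin n), (∀ i ∈ s, i ≠ k) →
      (1 + ∑ i ∈ s, single k i (t i)) ∈ elemGroup R n := by
    intro s
    induction s using Finset.induction with
    | empty => simpa using one_mem _
    | @insert a s ha ih =>
      intro hs
      have hak : a ≠ k := hs a (Finset.mem_insert_self a s)
      have key : (1 + single k a (t a)) * (1 + ∑ i ∈ s, single k i (t i))
          = 1 + ∑ i ∈ insert a s, single k i (t i) := by
        have hz : single k a (t a) * (∑ i ∈ s, single k i (t i)) = 0 := by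
          rw [Finset.mul_sum]
          refine Finset.sum_eq_zero fun i hi => ?_
          exact Matrix.single_mul_single_of_ne (c := t a) (i := k) (j := a) (h := hak) ..
        rw [Finset.sum_insert ha, mul_add, mul_one, add_mul, one_mul, hz]
        abel
      rw [← key]
      exact mul_mem (elem_mem (Ne.symm hak) (t a)) (ih fun i hi => hs i (Finset.mem_insert_of_mem hi))
  have : ∑ i ∈ Finset.univ.erase k, single k i (t i) = ∑ i, single k i (t i) :=
    Finset.sum_erase _ (by simp [ht])
  rw [← this]
  exact H _ (fun i hi => (Finset.mem_erase.mp hi).1)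

/-- Semilocal rings have stable range one (row version): given a unimodular row `v`,
one can add a combination of the entries of `v` to the `z`-th entry to make it a unit. -/
lemma stable_range (hsl : {I : Ideal R | I.IsMaximal}.Finite) (v : Fin n → R)
    (hv : ∃ b : Fin n → R, ∑ i, v i * b i = 1) (z : Fin n) :
    ∃ t : Fin n → R, t z = 0 ∧ IsUnit (v z + ∑ i, v i * t i) := by
  haveI : Finite {I : Ideal R // I.IsMaximal} := hsl.to_subtype
  have coprime : Pairwise fun a b : {I : Ideal R // I.IsMaximal} => IsCoprime a.1 b.1 := by
    intro a b hab
    rw [Ideal.isCoprime_iff_sup_eq]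
    exact Ideal.IsMaximal.coprime_of_ne a.2 b.2 (Subtype.coe_injective.ne hab)
  have exj : ∀ m : {I : Ideal R // I.IsMaximal}, ∃ j, v j ∉ m.1 := by
    intro m
    by_contra h
    push_neg at h
    obtain ⟨b, hb⟩ := hv
    have h1 : (1 : R) ∈ m.1 := hb ▸ Ideal.sum_mem _ fun i _ => Ideal.mul_mem_right _ _ (h i)
    exact m.2.ne_top ((Ideal.eq_top_iff_one _).mpr h1)
  choose j hj using exj
  classical
  have ht0 : ∀ i : Fin n, ∃ r : R, ∀ m : {I : Ideal R // I.IsMaximal},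
      Ideal.Quotient.mk m.1 r = (if v z ∈ m.1 ∧ j m = i then 1 else 0) := fun i =>
    Ideal.pi_quotient_surjective coprime _
  choose t ht using ht0
  set t' : Fin n → R := Function.update t z 0 with ht'
  refine ⟨t', Function.update_self z 0 t, ?_⟩
  set a : R := v z + ∑ i, v i * t' i with ha
  by_contra hna
  obtain ⟨I, hImax, haI⟩ := exists_max_ideal_of_mem_nonunits hna
  set m : {I : Ideal R // I.IsMaximal} := ⟨I, hImax⟩ with hm
  have hmk : Ideal.Quotient.mk I a = 0 := (Ideal.Quotient.eq_zero_iff_mem).mpr haI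
  have hmk' : Ideal.Quotient.mk I a
      = Ideal.Quotient.mk I (v z) + ∑ i, Ideal.Quotient.mk I (v i) * Ideal.Quotient.mk I (t' i) := by
    simp [ha]
  have htval : ∀ i : Fin n, Ideal.Quotient.mk I (t' i)
      = (if i ≠ z ∧ v z ∈ I ∧ j m = i then 1 else 0) := by
    intro i
    rcases eq_or_ne i z with rfl | hiz
    · simp [ht', Function.update_self]
    · rw [ht', Function.update_of_ne hiz]
      have := ht i m
      simp only [hm] at this
      rw [this]
      simp [hiz, hm]
  by_cases hvz : v z ∈ I
  · have hjz : j m ≠ z := fun h => hj m (h ▸ hvz)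
    have : Ideal.Quotient.mk I a = Ideal.Quotient.mk I (v (j m)) := by
      rw [hmk', Ideal.Quotient.eq_zero_iff_mem.mpr hvz, zero_add,
        Fintype.sum_eq_single (j m) (fun i hi => by
          rw [htval i, if_neg (by tauto), mul_zero])]
      rw [htval (j m), if_pos ⟨hjz, hvz, rfl⟩, mul_one]
    exact hj m (Ideal.Quotient.eq_zero_iff_mem.mp (this.symm.trans hmk))
  · have : Ideal.Quotient.mk I a = Ideal.Quotient.mk I (v z) := by
      rw [hmk']
      rw [Finset.sum_eq_zero (fun i _ => by rw [htval i, if_neg (by tauto), mul_zero]), add_zero]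
    exact hvz (Ideal.Quotient.eq_zero_iff_mem.mp (this.symm.trans hmk))

lemma vecMul_sum' {ι : Type*} (s : Finset ι) (v : Fin n → R) (M : ι → Matrix (Fin n) (Fin n) R) :
    vecMul v (∑ i ∈ s, M i) = ∑ i ∈ s, vecMul v (M i) := by
  ext k
  simp [vecMul, dotProduct, Matrix.sum_apply, Finset.mul_sum]
  rw [Finset.sum_comm]

lemma vecMul_std (v : Fin n → R) (i j : Fin n) (c : R) :
    vecMul v (single i j c) = Pi.single j (v i * c) := by
  ext k
  simp [vecMul, dotProduct, single, Pi.single_apply, ite_and, eq_comm]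

lemma vecMul_one_add_std (v : Fin n → R) (i j : Fin n) (c : R) :
    vecMul v (1 + single i j c) = Function.update v j (v j + v i * c) := by
  rw [vecMul_add, vecMul_one, vecMul_std]
  ext k
  rcases eq_or_ne k j with rfl | h
  · simp
  · simp [Function.update_of_ne h, Pi.single_apply, h]

lemma vecMul_one_add_sum_row (v : Fin n → R) (k : Fin n) (t : Fin n → R) :
    vecMul v (1 + ∑ i, single i k (t i)) = Function.update v k (v k + ∑ i, v i * t i) := by
  rw [vecMul_add, vecMul_one, vecMul_sum']
  ext j
  rcases eq_or_ne j k with rfl | h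
  · simp [vecMul_std]
  · simp [vecMul_std, Function.update_of_ne h, Pi.single_apply, h]

lemma vecMul_one_add_sum_col (v : Fin n → R) (k : Fin n) (t : Fin n → R) :
    vecMul v (1 + ∑ i, single k i (t i)) = fun j => v j + v k * t j := by
  rw [vecMul_add, vecMul_one, vecMul_sum']
  ext j
  simp [vecMul_std, Pi.single_apply]

end Aux

/-- Over a commutative semilocal ring `R` (finitely many maximal ideals), every unimodular
row `v` of length `n ≥ 2` is completable: there is `ε ∈ Eₙ(R)` with `v · ε = (1, 0, …, 0)`. -/
theorem unimodular_row_completable {R : Type*} [CommRing R]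
    (hsemilocal : {I : Ideal R | I.IsMaximal}.Finite)
    (n : ℕ) (hn : 2 ≤ n) (v : Fin n → R)
    (hv : ∃ b : Fin n → R, ∑ i, v i * b i = 1) :
    ∃ ε ∈ elemGroup R n, Matrix.vecMul v ε = Pi.single (⟨0, by omega⟩ : Fin n) 1 := by
  classical
  set z : Fin n := ⟨0, by omega⟩ with hzdef
  set o : Fin n := ⟨1, by omega⟩ with hodef
  have hzo : z ≠ o := by simp [hzdef, hodef, Fin.ext_iff]
  obtain ⟨t, htz, hu⟩ := stable_range hsemilocal v hv z
  set u : R := v z + ∑ i, v i * t i with hudef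
  obtain ⟨U, hU⟩ := hu
  have h1 : u * (↑U⁻¹ : R) = 1 := by rw [← hU]; exact U.mul_inv
  set M1 : Matrix (Fin n) (Fin n) R := 1 + ∑ i, single i z (t i) with hM1
  set w : Fin n → R := Function.update v z u with hwdef
  have hw : vecMul v M1 = w := by rw [hM1, vecMul_one_add_sum_row]
  have hwz : w z = u := Function.update_self _ _ _
  set t2 : Fin n → R := fun i => if i = z then 0 else -(↑U⁻¹ : R) * w i with ht2
  set M2 : Matrix (Fin n) (Fin n) R := 1 + ∑ i, single z i (t2 i) with hM2
  have hw2 : vecMul w M2 = Pi.single z u := by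
    rw [hM2, vecMul_one_add_sum_col]
    ext k
    rcases eq_or_ne k z with rfl | h
    · simp [ht2, hwz]
    · have : w z * t2 k = -(w k) := by
        rw [hwz, ht2]
        simp only [if_neg h]
        rw [← mul_assoc, mul_neg, h1]
        ring
      simp [this, Pi.single_apply, h]
  set E1 : Matrix (Fin n) (Fin n) R := 1 + single z o ((↑U⁻¹ : R) - 1) with hE1
  set E2 : Matrix (Fin n) (Fin n) R := 1 + single o z 1 with hE2
  set E3 : Matrix (Fin n) (Fin n) R := 1 + single z o (u - 1) with hE3
  set w3 : Fin n → R := Function.update (Pi.single z u) o (1 - u) with hw3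
  have h3 : vecMul (Pi.single z u) E1 = w3 := by
    rw [hE1, vecMul_one_add_std, hw3]
    rw [Pi.single_eq_of_ne (Ne.symm hzo), Pi.single_eq_same, zero_add, mul_sub, mul_one, h1]
  have hw3z : w3 z = u := by rw [hw3, Function.update_of_ne hzo, Pi.single_eq_same]
  have hw3o : w3 o = 1 - u := Function.update_self _ _ _
  set w4 : Fin n → R := Function.update w3 z 1 with hw4
  have h4 : vecMul w3 E2 = w4 := by
    rw [hE2, vecMul_one_add_std, hw4, hw3z, hw3o]
    ring_nf
  have hw4z : w4 z = 1 := Function.update_self _ _ _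
  have hw4o : w4 o = 1 - u := by rw [hw4, Function.update_of_ne (Ne.symm hzo), hw3o]
  have h5 : vecMul w4 E3 = Pi.single z 1 := by
    rw [hE3, vecMul_one_add_std, hw4z, hw4o]
    ext k
    rcases eq_or_ne k o with rfl | h
    · rw [Function.update_self, Pi.single_eq_of_ne (Ne.symm hzo)]
      ring
    · rw [Function.update_of_ne h]
      rcases eq_or_ne k z with rfl | h'
      · rw [hw4z, Pi.single_eq_same]
      · rw [Pi.single_eq_of_ne h']
        rw [hw4, Function.update_of_ne h', hw3, Function.update_of_ne h,
          Pi.single_eq_of_ne h']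
  refine ⟨M1 * (M2 * (E1 * (E2 * E3))), ?_, ?_⟩
  · refine mul_mem ?_ (mul_mem ?_ (mul_mem ?_ (mul_mem ?_ ?_)))
    · exact sum_row_mem z t htz
    · exact sum_col_mem z t2 (by simp [ht2])
    · exact elem_mem hzo _
    · exact elem_mem (Ne.symm hzo) _
    · exact elem_mem hzo _
  · rw [← vecMul_vecMul, ← vecMul_vecMul, ← vecMul_vecMul, ← vecMul_vecMul,
      hw, hw2, h3, h4, h5]
end

section
/- Let A be a commutative ring with 1 and n ≥ 3. Let v, w ∈ A^n be column vectors such that v = ε e_1 for some ε ∈ E_n(A) (where e_1 is the first standard basis column vector) and vᵗ w = 0. Then I_n + v wᵗ ∈ E_n(A). -/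
open Matrix

/-- Every element of `elemGroup` has a two-sided inverse in `elemGroup`. -/
lemma elemGroup_inv {R : Type*} [CommRing R] {n : ℕ} {ε : Matrix (Fin n) (Fin n) R}
    (h : ε ∈ elemGroup R n) :
    ∃ ε' ∈ elemGroup R n, ε * ε' = 1 ∧ ε' * ε = 1 := by
  induction h using Submonoid.closure_induction with
  | one => exact ⟨1, one_mem _, by simp⟩
  | mem M hM =>
    obtain ⟨i, j, t, hij, rfl⟩ := hM
    refine ⟨1 + Matrix.single i j (-t),
      Submonoid.subset_closure ⟨i, j, -t, hij, rfl⟩, ?_, ?_⟩ <;>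
    · have hz : Matrix.single i j t * Matrix.single i j (-t) = 0 :=
        Matrix.single_mul_single_of_ne (c := t) i j i hij.symm (-t)
      have hz' : Matrix.single i j (-t) * Matrix.single i j t = 0 :=
        Matrix.single_mul_single_of_ne (c := -t) i j i hij.symm t
      simp only [add_mul, mul_add, one_mul, mul_one, hz, hz']
      abel_nf
      rw [← Matrix.single_add]
      simp
  | mul x y _ _ hx hy =>
    obtain ⟨x', hx', hx1, hx2⟩ := hx
    obtain ⟨y', hy', hy1, hy2⟩ := hy
    refine ⟨y' * x', mul_mem hy' hx', ?_, ?_⟩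
    · rw [show x * y * (y' * x') = x * (y * y') * x' by noncomm_ring, hy1, mul_one, hx1]
    · rw [show y' * x' * (x * y) = y' * (x' * x) * y by noncomm_ring, hx2, mul_one, hy2]

lemma row_elem {R : Type*} [CommRing R] {n : ℕ} (i₀ : Fin n) (u : Fin n → R)
    (hu : u i₀ = 0) :
    1 + Matrix.vecMulVec (Pi.single i₀ 1) u ∈ elemGroup R n := by
  have key : ∀ s : Finset (Fin n), i₀ ∉ s →
      1 + ∑ j ∈ s, Matrix.single i₀ j (u j) ∈ elemGroup R n := by
    intro s
    induction s using Finset.induction with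
    | empty => intro _; simpa using one_mem _
    | @insert a s ha ih =>
      intro hi
      have hai₀ : i₀ ≠ a := fun h => hi (by simp [← h])
      have hs : i₀ ∉ s := fun h => hi (Finset.mem_insert_of_mem h)
      have prod_eq : (1 + Matrix.single i₀ a (u a)) *
          (1 + ∑ j ∈ s, Matrix.single i₀ j (u j)) =
          1 + ∑ j ∈ insert a s, Matrix.single i₀ j (u j) := by
        rw [Finset.sum_insert ha]
        have hz : Matrix.single i₀ a (u a) *
            (∑ j ∈ s, Matrix.single i₀ j (u j)) = 0 := by
          rw [Finset.mul_sum]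
          exact Finset.sum_eq_zero fun j _ =>
            Matrix.single_mul_single_of_ne (c := u a) i₀ a i₀ hai₀.symm (u j)
        noncomm_ring [hz]
      rw [← prod_eq]
      exact mul_mem (Submonoid.subset_closure ⟨i₀, a, u a, hai₀, rfl⟩) (ih hs)
  have sum_eq : Matrix.vecMulVec (Pi.single i₀ 1) u =
      ∑ j ∈ Finset.univ.erase i₀, Matrix.single i₀ j (u j) := by
    rw [Finset.sum_erase _ (by simp [hu])]
    ext a b
    simp only [Matrix.sum_apply, Matrix.vecMulVec_apply, Matrix.single,
      Matrix.of_apply, Pi.single_apply, ite_and]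
    by_cases h : i₀ = a
    · subst h; simp [Finset.sum_ite_eq]
    · simp [h, Ne.symm h, Finset.sum_ite_eq]
  rw [sum_eq]
  exact key _ (Finset.notMem_erase _ _)

lemma mul_vecMulVec {R : Type*} [CommRing R] {n : ℕ} (M : Matrix (Fin n) (Fin n) R)
    (a b : Fin n → R) : M * Matrix.vecMulVec a b = Matrix.vecMulVec (M.mulVec a) b := by
  ext i j
  simp [Matrix.mul_apply, Matrix.vecMulVec_apply, Matrix.mulVec, dotProduct,
    Finset.sum_mul, mul_assoc]

lemma vecMulVec_mul {R : Type*} [CommRing R] {n : ℕ} (M : Matrix (Fin n) (Fin n) R)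
    (a b : Fin n → R) : Matrix.vecMulVec a b * M = Matrix.vecMulVec a (Matrix.vecMul b M) := by
  ext i j
  simp [Matrix.mul_apply, Matrix.vecMulVec_apply, Matrix.vecMul, dotProduct,
    Finset.mul_sum, mul_assoc]

/-- Let `A` be a commutative ring, `n ≥ 3`, and `v, w ∈ Aⁿ` columns with `v = ε e₁` for
some `ε ∈ Eₙ(A)` and `vᵗ w = 0`.  Then `Iₙ + v wᵗ ∈ Eₙ(A)`. -/
theorem one_add_vecMulVec_mem_elem {A : Type*} [CommRing A] (n : ℕ) (hn : 3 ≤ n)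
    (v w : Fin n → A)
    (hv : ∃ ε ∈ elemGroup A n, v = ε.mulVec (Pi.single (⟨0, by omega⟩ : Fin n) 1))
    (hw : v ⬝ᵥ w = 0) :
    1 + Matrix.vecMulVec v w ∈ elemGroup A n := by
  obtain ⟨ε, hε, hvε⟩ := hv
  obtain ⟨ε', hε', hεε', hε'ε⟩ := elemGroup_inv hε
  set i₀ : Fin n := ⟨0, by omega⟩
  set u : Fin n → A := Matrix.vecMul w ε with hu_def
  have hu0 : u i₀ = 0 := by
    have : u i₀ = v ⬝ᵥ w := by
      simp only [hu_def, Matrix.vecMul, dotProduct, hvε, Matrix.mulVec_single_one,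
        mul_one]
      exact Finset.sum_congr rfl fun i _ => mul_comm _ _
    rw [this, hw]
  have key : ε * (1 + Matrix.vecMulVec (Pi.single i₀ 1) u) * ε' =
      1 + Matrix.vecMulVec v w := by
    rw [mul_add, mul_one, add_mul, hεε', _root_.mul_vecMulVec, _root_.vecMulVec_mul,
      ← hvε, hu_def, Matrix.vecMul_vecMul, hεε', Matrix.vecMul_one]
  rw [← key]
  exact mul_mem (mul_mem hε (row_elem i₀ u hu0)) hε'
end

section
/- Let A be a commutative Noetherian ℕ-graded ring with 1 and n ≥ 1. Let s ∈ A_0 be a non-zerodivisor and α ∈ GL_n(A) with α^+(0) = I_n. If the image α_s of α in GL_n(A_s) lies in SL_n(A_s), then there exists l_0 ∈ ℕ such that for all l ≥ l_0 one has α^+(s^l) ∈ SL_n(A). -/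
open Matrix

noncomputable def swHom {A : Type*} [CommRing A] (𝒜 : ℕ → AddSubgroup A) [GradedRing 𝒜]
    (a : A) : A →+* A :=
  (DirectSum.toSemiring
    (fun i => (AddMonoidHom.mulRight (a ^ i)).comp (𝒜 i).subtype)
    (by simp)
    (fun {i j} ai aj => by
      simp [pow_add]
      ring)).comp (DirectSum.decomposeRingEquiv 𝒜).toRingHom

theorem swHom_apply {A : Type*} [CommRing A] (𝒜 : ℕ → AddSubgroup A) [GradedRing 𝒜]
    (a b : A) :
    swHom 𝒜 a b = DirectSum.toAddMonoid
    (fun i => (AddMonoidHom.mulRight (a ^ i)).comp (𝒜 i).subtype)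
    (DirectSum.decompose 𝒜 b) :=
  DFunLike.congr_fun (DirectSum.toSemiring_coe_addMonoidHom _ _ _) (DirectSum.decompose 𝒜 b)

theorem swMatrix_eq_mapMatrix {A : Type*} [CommRing A] (𝒜 : ℕ → AddSubgroup A) [GradedRing 𝒜]
    {n : ℕ} (a : A) (α : Matrix (Fin n) (Fin n) A) :
    swMatrix 𝒜 a α = (swHom 𝒜 a).mapMatrix α := by
  ext i j
  simp [swMatrix, swPlus, swHom_apply, RingHom.mapMatrix_apply, Matrix.map_apply]

/-- Dilation lemma for `SLₙ` over graded rings.  Let `A` be a commutative Noetherian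
ℕ-graded ring, `n ≥ 1`, `s ∈ A₀` a non-zerodivisor, and `α ∈ GLₙ(A)` with `α⁺(0) = Iₙ`.
If the image `α_s` of `α` in `GLₙ(A_s)` lies in `SLₙ(A_s)`, then `α⁺(sˡ) ∈ SLₙ(A)` for
all `l ≫ 0`. -/
theorem graded_dilation_sl {A : Type*} [CommRing A] [IsNoetherianRing A]
    (𝒜 : ℕ → AddSubgroup A) [GradedRing 𝒜] (n : ℕ) (hn : 1 ≤ n)
    (s : A) (hs0 : s ∈ 𝒜 0) (hs : s ∈ nonZeroDivisors A)
    (α : Matrix (Fin n) (Fin n) A) (hα : IsUnit α)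
    (h0 : swMatrix 𝒜 0 α = 1)
    (hloc : ((algebraMap A (Localization.Away s)).mapMatrix α).det = 1) :
    ∃ l₀ : ℕ, ∀ l ≥ l₀, (swMatrix 𝒜 (s ^ l) α).det = 1 := by
  -- Since `s` is a non-zerodivisor, `A → A_s` is injective, so `det α = 1` already in `A`.
  have hpow : Submonoid.powers s ≤ nonZeroDivisors A := by
    rintro x ⟨k, rfl⟩
    exact pow_mem hs k
  have hinj : Function.Injective (algebraMap A (Localization.Away s)) :=
    IsLocalization.injective (Localization.Away s) hpow
  have hdet : α.det = 1 := by
    apply hinj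
    rw [_root_.map_one, RingHom.map_det]
    exact hloc
  refine ⟨0, fun l _ => ?_⟩
  rw [swMatrix_eq_mapMatrix, ← RingHom.map_det, hdet, _root_.map_one]
end
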